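/- arXiv:0711.0013 — 3 statements merged into one kernel-verified Lean document; each statement's English description precedes it below -/
import Mathlib

section
/- Monotonicity of solutions in G ∪ N (Lemma 5.3): Let α > 0 and let u be the corresponding solution. If either (i) there is b ∈ (0,∞) with u > 0 on [0,b) and u(b) = 0 (α ∈ N), or (ii) u(τ) > 0 for all τ > 0 and u(τ) → 0 as τ → ∞ (α ∈ G), then u'(τ) < 0 for all τ in (0, b) in case (i), respectively for all τ in (0, ∞) in case (ii). -/
open Set Filter Topology

/-!
Along a solution the energy `E = u'^2/2 + G(u)`, with `G' = F`, is nonincreasing because the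
damping `coth τ` is nonnegative, and `E(0+) = G(α)`. In both cases `E ≥ 0` up to a point `c` with
`u(c) < α` (`c = b(α)`, or any large `c` when `u → 0`). At a critical point `σ < c` this gives
`G(u(σ)) = E(σ) ≥ 0`, which for this `F` forces `F(u(σ)) > 0`, i.e. `u''(σ) < 0`: `u'` can only
cross zero downwards. Hence `u'(τ) ≥ 0` would give `u' > 0` on `(0, τ)` and `u(τ) > α`. Then `u`
returns to the level `α` at some `σ ∈ (τ, c)`, where `E(σ) ≤ G(α)` forces `u'(σ) = 0`, and the same
reasoning gives `u(σ) > α`, a contradiction.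
-/

section DownCrossing

variable {g : ℝ → ℝ} {r : ℝ}

theorem eventually_neg_nhdsGT_of_deriv_neg (hd : deriv g r < 0) (h0 : g r = 0) :
    ∀ᶠ x in 𝓝[>] r, g x < 0 := by
  filter_upwards [nhdsWithin_le_nhds (eventually_nhdsWithin_sign_eq_of_deriv_neg hd h0),
    self_mem_nhdsWithin] with x hx (hrx : r < x)
  exact sign_eq_neg_one_iff.1 (hx.trans (sign_neg (sub_neg.2 hrx)))

theorem eventually_pos_nhdsLT_of_deriv_neg (hd : deriv g r < 0) (h0 : g r = 0) :
    ∀ᶠ x in 𝓝[<] r, 0 < g x := by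
  filter_upwards [nhdsWithin_le_nhds (eventually_nhdsWithin_sign_eq_of_deriv_neg hd h0),
    self_mem_nhdsWithin] with x hx (hxr : x < r)
  exact sign_eq_one_iff.1 (hx.trans (sign_pos (sub_pos.2 hxr)))

theorem neg_of_nonpos_of_deriv_neg_at_zeros {t s : ℝ} (hts : t < s)
    (hg : ContinuousOn g (Icc t s)) (hzero : ∀ r ∈ Icc t s, g r = 0 → deriv g r < 0)
    (ht : g t ≤ 0) : g s < 0 := by
  have hle : Icc t s ⊆ {x | g x ≤ 0} := by
    refine IsClosed.Icc_subset_of_forall_mem_nhdsWithin ?_ ht fun r ⟨hr, hrI⟩ => ?_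
    · rw [inter_comm]
      exact hg.preimage_isClosed_of_isClosed isClosed_Icc isClosed_Iic
    obtain hneg | hr0 := (show g r ≤ 0 from hr).lt_or_eq
    · have hIcc : Icc t s ∈ 𝓝[>] r := Icc_mem_nhdsGT_of_mem hrI
      exact mem_of_superset (nhdsWithin_le_of_mem hIcc
        ((hg r (Ico_subset_Icc_self hrI)).eventually_lt_const hneg)) fun _ hx => (hx.le : g _ ≤ 0)
    · exact (eventually_neg_nhdsGT_of_deriv_neg
        (hzero r (Ico_subset_Icc_self hrI) hr0) hr0).mono fun _ hx => (hx.le : g _ ≤ 0)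
  refine (hle (right_mem_Icc.2 hts.le)).lt_of_ne fun hs0 => ?_
  obtain ⟨x, hx, hxI⟩ := ((eventually_pos_nhdsLT_of_deriv_neg
    (hzero s (right_mem_Icc.2 hts.le) hs0) hs0).and (Ioo_mem_nhdsLT hts)).exists
  exact (hle (Ioo_subset_Icc_self hxI)).not_gt hx

end DownCrossing

structure SolvesDampedODE (k F u : ℝ → ℝ) : Prop where
  differentiableAt : ∀ τ > 0, DifferentiableAt ℝ u τ
  differentiableAt_deriv : ∀ τ > 0, DifferentiableAt ℝ (deriv u) τ
  ode : ∀ τ > 0, deriv (deriv u) τ + k τ * deriv u τ + F (u τ) = 0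

noncomputable def energy (G u : ℝ → ℝ) (τ : ℝ) : ℝ := deriv u τ ^ 2 / 2 + G (u τ)

theorem tendsto_energy_nhdsGT_zero {G u : ℝ → ℝ} (hG : ContinuousAt G (u 0))
    (hu : ContinuousWithinAt u (Ici 0) 0) (hu' : Tendsto (deriv u) (𝓝[>] 0) (𝓝 0)) :
    Tendsto (energy G u) (𝓝[>] 0) (𝓝 (G (u 0))) := by
  have hu₀ : Tendsto u (𝓝[>] 0) (𝓝 (u 0)) :=
    hu.tendsto.mono_left (nhdsWithin_mono _ Ioi_subset_Ici_self)
  have h := ((hu'.pow 2).div_const 2).add (hG.tendsto.comp hu₀)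
  rwa [zero_pow two_ne_zero, zero_div, zero_add] at h

namespace SolvesDampedODE

variable {k F G u : ℝ → ℝ}

theorem hasDerivAt_energy (hu : SolvesDampedODE k F u) (hG : ∀ s, HasDerivAt G (F s) s)
    {τ : ℝ} (hτ : 0 < τ) : HasDerivAt (energy G u) (-(k τ * deriv u τ ^ 2)) τ := by
  have h := (((hu.differentiableAt_deriv τ hτ).hasDerivAt.pow 2).div_const 2).add
    ((hG (u τ)).comp τ (hu.differentiableAt τ hτ).hasDerivAt)
  refine h.congr_deriv ?_
  norm_num
  linear_combination deriv u τ * hu.ode τ hτ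

theorem antitoneOn_energy (hu : SolvesDampedODE k F u) (hG : ∀ s, HasDerivAt G (F s) s)
    (hk : ∀ τ > 0, 0 ≤ k τ) : AntitoneOn (energy G u) (Ioi 0) := by
  have hE := fun τ (hτ : τ ∈ Ioi (0 : ℝ)) => hu.hasDerivAt_energy hG hτ
  refine antitoneOn_of_deriv_nonpos (convex_Ioi 0)
    (fun τ hτ => (hE τ hτ).continuousAt.continuousWithinAt) ?_ ?_ <;> rw [interior_Ioi]
  · exact fun τ hτ => (hE τ hτ).differentiableAt.differentiableWithinAt
  · intro τ hτ
    rw [(hE τ hτ).deriv]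
    exact neg_nonpos.2 (mul_nonneg (hk τ hτ) (sq_nonneg _))

theorem energy_le_initial (hu : SolvesDampedODE k F u) (hG : ∀ s, HasDerivAt G (F s) s)
    (hk : ∀ τ > 0, 0 ≤ k τ) (huc : ContinuousWithinAt u (Ici 0) 0)
    (hu' : Tendsto (deriv u) (𝓝[>] 0) (𝓝 0)) {τ : ℝ} (hτ : 0 < τ) :
    energy G u τ ≤ G (u 0) := by
  refine ge_of_tendsto (tendsto_energy_nhdsGT_zero (hG (u 0)).continuousAt huc hu') ?_
  filter_upwards [Ioo_mem_nhdsGT hτ] with ε hε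
  exact hu.antitoneOn_energy hG hk hε.1 hτ hε.2.le

theorem energy_nonneg_of_tendsto_atTop (hu : SolvesDampedODE k F u)
    (hG : ∀ s, HasDerivAt G (F s) s) (hk : ∀ τ > 0, 0 ≤ k τ) (hG₀ : G 0 = 0)
    (hlim : Tendsto u atTop (𝓝 0)) {c : ℝ} (hc : 0 < c) : 0 ≤ energy G u c := by
  have hGu : Tendsto (fun s => G (u s)) atTop (𝓝 0) :=
    hG₀ ▸ (hG 0).continuousAt.tendsto.comp hlim
  refine le_of_tendsto hGu ?_
  filter_upwards [eventually_ge_atTop c] with s hs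
  calc G (u s) ≤ energy G u s := le_add_of_nonneg_left (by positivity)
    _ ≤ energy G u c := hu.antitoneOn_energy hG hk hc (hc.trans_le hs) hs

theorem deriv_neg_of_energy_nonneg (hu : SolvesDampedODE k F u)
    (hG : ∀ s, HasDerivAt G (F s) s) (hGF : ∀ s > 0, 0 ≤ G s → 0 < F s)
    (hk : ∀ τ > 0, 0 ≤ k τ) (huc : ContinuousOn u (Ici 0))
    (hu' : Tendsto (deriv u) (𝓝[>] 0) (𝓝 0)) {c : ℝ} (hc : 0 < c) (hcu : u c < u 0)
    (hpos : ∀ τ ∈ Ioo 0 c, 0 < u τ) (hE : 0 ≤ energy G u c) :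
    ∀ τ ∈ Ioo 0 c, deriv u τ < 0 := by
  have hcrit : ∀ σ ∈ Ioo 0 c, deriv u σ = 0 → deriv (deriv u) σ < 0 := by
    intro σ hσ h0
    have hGσ : 0 ≤ G (u σ) := by
      have h := hE.trans (hu.antitoneOn_energy hG hk hσ.1 hc hσ.2.le)
      simpa [energy, h0] using h
    have hode := hu.ode σ hσ.1
    rw [h0, mul_zero, add_zero] at hode
    linarith [hGF _ (hpos σ hσ) hGσ]
  have hrise : ∀ σ ∈ Ioo 0 c, 0 ≤ deriv u σ → u 0 < u σ := by
    intro σ hσ hσ₀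
    have hmono : StrictMonoOn u (Icc 0 σ) := by
      refine strictMonoOn_of_deriv_pos (convex_Icc 0 σ) (huc.mono Icc_subset_Ici_self)
        fun t ht => ?_
      rw [interior_Icc] at ht
      by_contra! ht₀
      have hcont : ContinuousOn (deriv u) (Icc t σ) := fun x hx =>
        (hu.differentiableAt_deriv x (ht.1.trans_le hx.1)).continuousAt.continuousWithinAt
      exact (neg_of_nonpos_of_deriv_neg_at_zeros ht.2 hcont
        (fun r hr => hcrit r ⟨ht.1.trans_le hr.1, hr.2.trans_lt hσ.2⟩) ht₀).not_ge hσ₀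
    exact hmono (left_mem_Icc.2 hσ.1.le) (right_mem_Icc.2 hσ.1.le) hσ.1
  have hlevel : ∀ σ ∈ Ioo 0 c, u σ = u 0 → deriv u σ = 0 := by
    intro σ hσ hσα
    have h := hu.energy_le_initial hG hk (huc 0 self_mem_Ici) hu' hσ.1
    rw [energy, hσα] at h
    exact pow_eq_zero_iff two_ne_zero |>.1 (le_antisymm (by linarith) (sq_nonneg _))
  intro τ hτ
  by_contra! hτ₀
  obtain ⟨σ, hσI, hσα⟩ : u 0 ∈ u '' Icc τ c :=
    intermediate_value_Icc' hτ.2.le (huc.mono fun x hx => hτ.1.le.trans hx.1)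
      ⟨hcu.le, (hrise τ hτ hτ₀).le⟩
  have hσ : σ ∈ Ioo 0 c :=
    ⟨hτ.1.trans_le hσI.1, hσI.2.lt_of_ne (by rintro rfl; exact hcu.ne hσα)⟩
  exact (hrise σ hσ (hlevel σ hσ hσα).ge).ne' hσα

end SolvesDampedODE

noncomputable def potential (p a b s : ℝ) : ℝ := a / (p + 1) * s ^ (p + 1) - b / 2 * s ^ 2

theorem potential_zero {p : ℝ} (hp : p + 1 ≠ 0) (a b : ℝ) : potential p a b 0 = 0 := by
  simp [potential, Real.zero_rpow hp]

theorem hasDerivAt_potential {p : ℝ} (hp : 0 ≤ p) (a b s : ℝ) :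
    HasDerivAt (potential p a b) (a * s ^ p - b * s) s := by
  have h := ((Real.hasDerivAt_rpow_const (x := s) (p := p + 1) (Or.inr (by linarith))).const_mul
    (a / (p + 1))).sub ((hasDerivAt_pow 2 s).const_mul (b / 2))
  refine h.congr_deriv ?_
  rw [add_sub_cancel_right]
  field_simp
  ring

theorem sub_pos_of_potential_nonneg {p a b s : ℝ} (hp : 1 < p) (hb : 0 < b) (hs : 0 < s)
    (h : 0 ≤ potential p a b s) : 0 < a * s ^ p - b * s := by
  have hsplit : a * s ^ p - b * s = (p + 1) / s * potential p a b s + (p - 1) / 2 * (b * s) := by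
    rw [potential, Real.rpow_add hs, Real.rpow_one]
    field_simp
    ring
  have hp₁ : 0 < p - 1 := sub_pos.2 hp
  rw [hsplit]
  exact add_pos_of_nonneg_of_pos (mul_nonneg (by positivity) h) (by positivity)

theorem monotonicity_of_solutions_general
    (m a b : ℝ) (hm : 2 < m) (hb : 0 < b)
    (F : ℝ → ℝ) (hF : ∀ s, F s = a * s ^ (1 + 2 / m) - b * s)
    (α : ℝ) (hα : 0 < α)
    (u : ℝ → ℝ)
    (huc : ContinuousOn u (Ici 0))
    (hud : ∀ τ ∈ Ioi (0 : ℝ), DifferentiableAt ℝ u τ)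
    (hud' : ∀ τ ∈ Ioi (0 : ℝ), DifferentiableAt ℝ (deriv u) τ)
    (hode : ∀ τ ∈ Ioi (0 : ℝ),
      deriv (deriv u) τ + (Real.cosh τ / Real.sinh τ) * deriv u τ + F (u τ) = 0)
    (hu0 : u 0 = α)
    (hu'0 : Tendsto (deriv u) (nhdsWithin 0 (Ioi 0)) (nhds 0)) :
    (∀ bα : ℝ, 0 < bα → u bα = 0 → (∀ τ ∈ Ico 0 bα, 0 < u τ) →
        ∀ τ ∈ Ioo 0 bα, deriv u τ < 0) ∧
    ((∀ τ ∈ Ioi (0 : ℝ), 0 < u τ) → Tendsto u atTop (nhds 0) →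
        ∀ τ ∈ Ioi (0 : ℝ), deriv u τ < 0) := by
  have hp : 1 < 1 + 2 / m := lt_add_of_pos_right 1 (by positivity)
  have hG (s : ℝ) : HasDerivAt (potential (1 + 2 / m) a b) (F s) s :=
    hF s ▸ hasDerivAt_potential (by linarith) a b s
  have hGF (s : ℝ) (hs : 0 < s) (h : 0 ≤ potential (1 + 2 / m) a b s) : 0 < F s :=
    hF s ▸ sub_pos_of_potential_nonneg hp hb hs h
  have hG₀ : potential (1 + 2 / m) a b 0 = 0 := potential_zero (by linarith) a b
  have hk (τ : ℝ) (hτ : 0 < τ) : 0 ≤ Real.cosh τ / Real.sinh τ :=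
    div_nonneg (Real.cosh_pos τ).le (Real.sinh_pos_iff.2 hτ).le
  have hu : SolvesDampedODE (fun τ => Real.cosh τ / Real.sinh τ) F u := ⟨hud, hud', hode⟩
  have hneg {c : ℝ} := hu.deriv_neg_of_energy_nonneg hG hGF hk huc hu'0 (c := c)
  refine ⟨fun c hc hcu hpos => hneg hc (by rwa [hcu, hu0]) (fun τ hτ => hpos τ ⟨hτ.1.le, hτ.2⟩) ?_,
    fun hpos hlim τ hτ => ?_⟩
  · rw [energy, hcu, hG₀, add_zero]
    positivity
  · obtain ⟨c, hτc, hcu⟩ :=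
      ((eventually_gt_atTop τ).and (hlim.eventually_lt_const (hu0 ▸ hα))).exists
    exact hneg (hτ.trans hτc) hcu (fun s hs => hpos s hs.1)
      (hu.energy_nonneg_of_tendsto_atTop hG hk hG₀ hlim (hτ.trans hτc)) τ ⟨hτ, hτc⟩

/-- Monotonicity of solutions in `G ∪ N` (Lemma 5.3): if the solution `u` of the
initial value problem either (i) has a smallest zero `b(α) ∈ (0,∞)` (case `α ∈ N`),
or (ii) stays positive and tends to `0` at infinity (case `α ∈ G`), then
`u' < 0` on `(0, b(α))`, respectively on `(0,∞)`. -/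
theorem monotonicity_of_solutions
    (m a b : ℝ) (hm : 2 < m) (ha : 0 < a) (hb : 0 < b)
    (F : ℝ → ℝ) (hF : ∀ s, F s = a * s ^ (1 + 2 / m) - b * s)
    (α : ℝ) (hα : 0 < α)
    (u : ℝ → ℝ)
    (huc : ContinuousOn u (Ici 0))
    (hud : ∀ τ ∈ Ioi (0 : ℝ), DifferentiableAt ℝ u τ)
    (hud' : ∀ τ ∈ Ioi (0 : ℝ), DifferentiableAt ℝ (deriv u) τ)
    (hode : ∀ τ ∈ Ioi (0 : ℝ),
      deriv (deriv u) τ + (Real.cosh τ / Real.sinh τ) * deriv u τ + F (u τ) = 0)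
    (hu0 : u 0 = α)
    (hu'0 : Tendsto (deriv u) (nhdsWithin 0 (Ioi 0)) (nhds 0)) :
    (∀ bα : ℝ, 0 < bα → u bα = 0 → (∀ τ ∈ Ico 0 bα, 0 < u τ) →
        ∀ τ ∈ Ioo 0 bα, deriv u τ < 0) ∧
    ((∀ τ ∈ Ioi (0 : ℝ), 0 < u τ) → Tendsto u atTop (nhds 0) →
        ∀ τ ∈ Ioi (0 : ℝ), deriv u τ < 0) :=
  monotonicity_of_solutions_general m a b hm hb F hF α hα u huc hud hud' hode hu0 hu'0
end

section
/- The variation w must change sign before τ₁ (Lemma 5.4): Let α ∈ G ∪ N, let u be the corresponding solution (so u is strictly decreasing on (0, b(α))), let ξ₁ = (b̃/ã)^{m/2} be the positive zero of f, and let τ₁ ∈ (0, b(α)) be the unique point with u(τ₁) = ξ₁. Let w be the solution of the linearized equation w''(τ) + coth(τ)·w'(τ) + f'(u(τ))·w(τ) = 0 on (0,∞) with w(0) = 1 and lim_{τ→0+} w'(τ) = 0, where f'(s) = ã(1+2/m)s^{2/m} − b̃. Then w has a zero in (0, τ₁). -/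
/-!
Let `ξ₁` be the positive zero of `f` and `P` the primitive of `f` with `P 0 = 0`. Along a
solution the energy `u'² / 2 + P u` decreases, so `u → 0` forces `P α ≥ 0`, i.e. `α > ξ₁`.
Let `σ ≤ τ₁` be the first time `u` reaches `ξ₁`. Before `σ` we have `f u > 0`, hence
`(sinh · u')' = -sinh · f u < 0` and `u' < 0` on `(0, σ]`. If `w` stayed positive on `(0, σ)`,
the weighted Wronskian `Ψ = sinh · (w · (f ∘ u)' - w' · f u)` would satisfy `Ψ(0⁺) = 0` and
`Ψ' = sinh · w · f''(u) · u'² > 0` (`f` is convex on `(0, ∞)`), so `Ψ σ > 0`; but `f ξ₁ = 0`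
and `f' ξ₁ > 0` give `Ψ σ = sinh σ · w σ · f' ξ₁ · u' σ ≤ 0`.
-/

open Set Filter Real Topology

lemma StrictMonoOn.lt_of_tendsto_nhdsGT {g : ℝ → ℝ} {a c L t : ℝ}
    (hg : StrictMonoOn g (Ioc a c)) (hlim : Tendsto g (𝓝[>] a) (𝓝 L)) (ht : t ∈ Ioc a c) :
    L < g t := by
  obtain ⟨s, has, hst⟩ := exists_between ht.1
  have hs : s ∈ Ioc a c := ⟨has, hst.le.trans ht.2⟩
  have hLs : L ≤ g s := le_of_tendsto hlim <| by
    filter_upwards [Ioo_mem_nhdsGT has] with x hx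
    exact (hg ⟨hx.1, hx.2.le.trans hs.2⟩ hs hx.2).le
  exact hLs.trans_lt (hg hs ht hst)

lemma AntitoneOn.le_of_tendsto_nhdsGT {g : ℝ → ℝ} {a L t : ℝ}
    (hg : AntitoneOn g (Ioi a)) (hlim : Tendsto g (𝓝[>] a) (𝓝 L)) (ht : a < t) :
    g t ≤ L :=
  ge_of_tendsto hlim <| by
    filter_upwards [Ioo_mem_nhdsGT ht] with x hx
    exact hg hx.1 ht hx.2.le

lemma nonneg_of_pos_of_forall_ne_zero {w : ℝ → ℝ} {a b : ℝ} (hab : a ≤ b)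
    (hw : ContinuousOn w (Icc a b)) (ha : 0 < w a) (hne : ∀ s ∈ Ioo a b, w s ≠ 0) :
    0 ≤ w b := by
  by_contra! hb
  obtain ⟨s, hs, hws⟩ := intermediate_value_Ioo' hab hw ⟨hb, ha⟩
  exact hne s hs hws

lemma exists_first_eq_of_lt_of_le {u : ℝ → ℝ} {a c ξ : ℝ} (hac : a ≤ c)
    (hu : ContinuousOn u (Icc a c)) (ha : ξ < u a) (hc : u c ≤ ξ) :
    ∃ σ ∈ Ioc a c, u σ = ξ ∧ ∀ t ∈ Ico a σ, ξ < u t := by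
  set S := Icc a c ∩ u ⁻¹' Iic ξ
  have hS : IsClosed S := hu.preimage_isClosed_of_isClosed isClosed_Icc isClosed_Iic
  have hSbdd : BddBelow S := ⟨a, fun x hx => hx.1.1⟩
  have hσS : sInf S ∈ S := hS.csInf_mem ⟨c, ⟨hac, le_rfl⟩, hc⟩ hSbdd
  have hbefore : ∀ t ∈ Ico a (sInf S), ξ < u t := fun t ht => by
    by_contra! hle
    exact (csInf_le hSbdd ⟨⟨ht.1, ht.2.le.trans hσS.1.2⟩, hle⟩).not_gt ht.2
  have haσ : a < sInf S := hσS.1.1.lt_of_ne fun h => (h ▸ hσS.2 : u a ≤ ξ).not_gt ha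
  refine ⟨sInf S, ⟨haσ, hσS.1.2⟩, le_antisymm hσS.2 ?_, hbefore⟩
  have hσ : Ico a (sInf S) ∈ 𝓝[<] sInf S := Ico_mem_nhdsLT haσ
  have hcont : ContinuousWithinAt u (Iio (sInf S)) (sInf S) :=
    (hu _ hσS.1).mono_of_mem_nhdsWithin <|
      mem_of_superset hσ fun x hx => ⟨hx.1, hx.2.le.trans hσS.1.2⟩
  refine ge_of_tendsto hcont ?_
  filter_upwards [hσ] with t ht
  exact (hbefore t ht).le

-- `g τ s = f s` gives the equation for `u`, and `g τ s = f' (u τ) * s` its linearization along `u`.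
structure IsRadialSolution (g : ℝ → ℝ → ℝ) (u : ℝ → ℝ) : Prop where
  differentiableAt : ∀ τ ∈ Ioi (0 : ℝ), DifferentiableAt ℝ u τ
  differentiableAt_deriv : ∀ τ ∈ Ioi (0 : ℝ), DifferentiableAt ℝ (deriv u) τ
  ode : ∀ τ ∈ Ioi (0 : ℝ), deriv (deriv u) τ + cosh τ / sinh τ * deriv u τ + g τ (u τ) = 0
  continuousOn : ContinuousOn u (Ici 0)
  tendsto_deriv : Tendsto (deriv u) (𝓝[>] 0) (𝓝 0)

lemma tendsto_sinh_nhdsGT_zero : Tendsto sinh (𝓝[>] 0) (𝓝 0) :=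
  (continuous_sinh.tendsto' 0 0 sinh_zero).mono_left nhdsWithin_le_nhds

namespace IsRadialSolution

variable {g : ℝ → ℝ → ℝ} {u : ℝ → ℝ} {t : ℝ}

lemma tendsto_nhdsGT (hu : IsRadialSolution g u) : Tendsto u (𝓝[>] 0) (𝓝 (u 0)) :=
  (hu.continuousOn 0 self_mem_Ici).mono_left (nhdsWithin_mono 0 Ioi_subset_Ici_self)

lemma deriv_deriv_eq (hu : IsRadialSolution g u) (ht : 0 < t) :
    deriv (deriv u) t = -(cosh t / sinh t * deriv u t) - g t (u t) := by
  linarith [hu.ode t ht]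

lemma hasDerivAt_sinh_mul_deriv (hu : IsRadialSolution g u) (ht : 0 < t) :
    HasDerivAt (fun s => sinh s * deriv u s) (-(sinh t * g t (u t))) t := by
  refine ((hasDerivAt_sinh t).mul (hu.differentiableAt_deriv t ht).hasDerivAt).congr_deriv ?_
  rw [hu.deriv_deriv_eq ht]
  field_simp [(sinh_pos_iff.2 ht).ne']
  ring

lemma deriv_neg (hu : IsRadialSolution g u) {σ : ℝ}
    (hg : ∀ t ∈ Ioo 0 σ, 0 < g t (u t)) : ∀ t ∈ Ioc 0 σ, deriv u t < 0 := by
  have hmono : StrictMonoOn (fun s => -(sinh s * deriv u s)) (Ioc 0 σ) := by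
    refine strictMonoOn_of_hasDerivWithinAt_pos (convex_Ioc 0 σ)
      (fun t ht => (hu.hasDerivAt_sinh_mul_deriv ht.1).neg.continuousAt.continuousWithinAt)
      (fun t ht => (hu.hasDerivAt_sinh_mul_deriv (interior_subset ht).1).neg.hasDerivWithinAt)
      ?_
    intro t ht
    rw [interior_Ioc] at ht
    simpa using mul_pos (sinh_pos_iff.2 ht.1) (hg t ht)
  have hlim : Tendsto (fun s => -(sinh s * deriv u s)) (𝓝[>] 0) (𝓝 0) := by
    simpa using (tendsto_sinh_nhdsGT_zero.mul hu.tendsto_deriv).neg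
  exact fun t ht => neg_of_mul_neg_right (neg_pos.1 (hmono.lt_of_tendsto_nhdsGT hlim ht))
    (sinh_pos_iff.2 ht.1).le

lemma hasDerivAt_energy {f P : ℝ → ℝ} (hu : IsRadialSolution (fun _ => f) u) (ht : 0 < t)
    (hP : HasDerivAt P (f (u t)) (u t)) :
    HasDerivAt (fun s => deriv u s ^ 2 / 2 + P (u s))
      (-(cosh t / sinh t * deriv u t ^ 2)) t := by
  have hU := (hu.differentiableAt t ht).hasDerivAt
  refine ((((hu.differentiableAt_deriv t ht).hasDerivAt.pow 2).div_const 2).add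
    (hP.comp t hU)).congr_deriv ?_
  rw [hu.deriv_deriv_eq ht]
  push_cast
  ring

lemma potential_le_of_tendsto {f P : ℝ → ℝ} (hu : IsRadialSolution (fun _ => f) u)
    (hP : ∀ s, HasDerivAt P (f s) s) {l : Filter ℝ} [l.NeBot] (hl : ∀ᶠ t in l, 0 < t)
    {L : ℝ} (hul : Tendsto u l (𝓝 L)) : P L ≤ P (u 0) := by
  have hPc : Continuous P := continuous_iff_continuousAt.2 fun s => (hP s).continuousAt
  have hanti : AntitoneOn (fun s => deriv u s ^ 2 / 2 + P (u s)) (Ioi 0) := by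
    refine antitoneOn_of_hasDerivWithinAt_nonpos (convex_Ioi 0)
      (fun t ht => (hu.hasDerivAt_energy ht (hP _)).continuousAt.continuousWithinAt)
      (fun t ht => (hu.hasDerivAt_energy (interior_subset ht) (hP _)).hasDerivWithinAt) ?_
    intro t ht
    rw [interior_Ioi] at ht
    have := mul_nonneg (div_nonneg (cosh_pos t).le (sinh_pos_iff.2 ht).le)
      (sq_nonneg (deriv u t))
    linarith
  have hlim : Tendsto (fun s => deriv u s ^ 2 / 2 + P (u s)) (𝓝[>] 0) (𝓝 (P (u 0))) := by
    simpa using ((hu.tendsto_deriv.pow 2).div_const 2).add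
      ((hPc.tendsto _).comp hu.tendsto_nhdsGT)
  refine le_of_tendsto ((hPc.tendsto L).comp hul) ?_
  filter_upwards [hl] with t ht
  have := hanti.le_of_tendsto_nhdsGT hlim ht
  have := sq_nonneg (deriv u t)
  simp only [Function.comp_apply]
  linarith

end IsRadialSolution

/-- `sinh t` times the Wronskian of `w` and `f ∘ u`, when `df` is the derivative of `f`. -/
noncomputable def weightedWronskian (f df u w : ℝ → ℝ) (t : ℝ) : ℝ :=
  sinh t * (w t * (df (u t) * deriv u t) - deriv w t * f (u t))

namespace IsRadialSolution

variable {f df d2f u w : ℝ → ℝ} {t : ℝ}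

lemma hasDerivAt_weightedWronskian (hu : IsRadialSolution (fun _ => f) u)
    (hw : IsRadialSolution (fun τ s => df (u τ) * s) w) (ht : 0 < t)
    (hf : HasDerivAt f (df (u t)) (u t)) (hdf : HasDerivAt df (d2f (u t)) (u t)) :
    HasDerivAt (weightedWronskian f df u w) (sinh t * w t * d2f (u t) * deriv u t ^ 2) t := by
  have hU := (hu.differentiableAt t ht).hasDerivAt
  have hU' := (hu.differentiableAt_deriv t ht).hasDerivAt
  have hW := (hw.differentiableAt t ht).hasDerivAt
  have hW' := (hw.differentiableAt_deriv t ht).hasDerivAt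
  refine ((hasDerivAt_sinh t).mul ((hW.mul ((hdf.comp t hU).mul hU')).sub
    (hW'.mul (hf.comp t hU)))).congr_deriv ?_
  simp only [Function.comp_apply, Pi.mul_apply, Pi.sub_apply]
  rw [hu.deriv_deriv_eq ht, hw.deriv_deriv_eq ht]
  field_simp [(sinh_pos_iff.2 ht).ne']
  ring

lemma tendsto_weightedWronskian (hu : IsRadialSolution (fun _ => f) u)
    (hw : IsRadialSolution (fun τ s => df (u τ) * s) w)
    (hf : ContinuousAt f (u 0)) (hdf : ContinuousAt df (u 0)) :
    Tendsto (weightedWronskian f df u w) (𝓝[>] 0) (𝓝 0) := by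
  have h := tendsto_sinh_nhdsGT_zero.mul ((hw.tendsto_nhdsGT.mul
    ((hdf.tendsto.comp hu.tendsto_nhdsGT).mul hu.tendsto_deriv)).sub
    (hw.tendsto_deriv.mul (hf.tendsto.comp hu.tendsto_nhdsGT)))
  rwa [zero_mul] at h

theorem exists_zero_of_linearized (hu : IsRadialSolution (fun _ => f) u)
    (hw : IsRadialSolution (fun τ s => df (u τ) * s) w) (hw0 : 0 < w 0) {σ : ℝ} (hσ : 0 < σ)
    (hfu : ∀ t ∈ Ioo 0 σ, 0 < f (u t)) (hfσ : f (u σ) = 0) (hdfσ : 0 < df (u σ))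
    (hd2f : ∀ t ∈ Ioo 0 σ, 0 < d2f (u t))
    (hf : ∀ t ∈ Ioc 0 σ, HasDerivAt f (df (u t)) (u t))
    (hdf : ∀ t ∈ Ioc 0 σ, HasDerivAt df (d2f (u t)) (u t))
    (hf0 : ContinuousAt f (u 0)) (hdf0 : ContinuousAt df (u 0)) :
    ∃ t ∈ Ioo 0 σ, w t = 0 := by
  by_contra! hne
  have hwc : ∀ t, ContinuousOn w (Icc 0 t) := fun t => hw.continuousOn.mono fun _ hs => hs.1
  have hw_nonneg : ∀ t ∈ Ioc 0 σ, 0 ≤ w t := fun t ht =>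
    nonneg_of_pos_of_forall_ne_zero ht.1.le (hwc t) hw0 fun s hs => hne s ⟨hs.1, hs.2.trans_le ht.2⟩
  have hu' := hu.deriv_neg hfu
  have hW : ∀ t ∈ Ioc 0 σ, HasDerivAt (weightedWronskian f df u w)
      (sinh t * w t * d2f (u t) * deriv u t ^ 2) t := fun t ht =>
    hu.hasDerivAt_weightedWronskian hw ht.1 (hf t ht) (hdf t ht)
  have hmono : StrictMonoOn (weightedWronskian f df u w) (Ioc 0 σ) := by
    refine strictMonoOn_of_hasDerivWithinAt_pos (convex_Ioc 0 σ)
      (fun t ht => (hW t ht).continuousAt.continuousWithinAt)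
      (fun t ht => (hW t (interior_subset ht)).hasDerivWithinAt) ?_
    intro t ht
    rw [interior_Ioc] at ht
    have hwt : 0 < w t := (hw_nonneg t ⟨ht.1, ht.2.le⟩).lt_of_ne' (hne t ht)
    exact mul_pos (mul_pos (mul_pos (sinh_pos_iff.2 ht.1) hwt) (hd2f t ht))
      (sq_pos_of_neg (hu' t ⟨ht.1, ht.2.le⟩))
  have hpos := hmono.lt_of_tendsto_nhdsGT (hu.tendsto_weightedWronskian hw hf0 hdf0)
    ⟨hσ, le_rfl⟩
  have hnonpos : weightedWronskian f df u w σ ≤ 0 := by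
    rw [weightedWronskian, hfσ, mul_zero, sub_zero]
    exact mul_nonpos_of_nonneg_of_nonpos (sinh_pos_iff.2 hσ).le <|
      mul_nonpos_of_nonneg_of_nonpos (hw_nonneg σ ⟨hσ, le_rfl⟩)
        (mul_nonpos_of_nonneg_of_nonpos hdfσ.le (hu' σ ⟨hσ, le_rfl⟩).le)
  exact hpos.not_ge hnonpos

end IsRadialSolution

noncomputable def powerNonlin (a b m s : ℝ) : ℝ := a * s ^ (1 + 2 / m) - b * s

noncomputable def powerNonlin' (a b m s : ℝ) : ℝ := a * (1 + 2 / m) * s ^ (2 / m) - b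

noncomputable def powerNonlin'' (a m s : ℝ) : ℝ := a * (1 + 2 / m) * (2 / m) * s ^ (2 / m - 1)

noncomputable def powerPotential (a b m s : ℝ) : ℝ :=
  a * s ^ (2 + 2 / m) / (2 + 2 / m) - b * s ^ 2 / 2

section PowerNonlinearity

variable {a b m ξ s : ℝ}

lemma hasDerivAt_powerPotential (hm : 0 < m) (s : ℝ) :
    HasDerivAt (powerPotential a b m) (powerNonlin a b m s) s := by
  have h : (1 : ℝ) ≤ 2 + 2 / m := by linarith [show 0 < 2 / m by positivity]
  refine ((((hasDerivAt_id s).rpow_const (Or.inr h)).const_mul a).div_const _ |>.sub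
    ((((hasDerivAt_id s).pow 2).const_mul b).div_const 2)).congr_deriv ?_
  rw [show (2 : ℝ) + 2 / m - 1 = 1 + 2 / m by ring, powerNonlin]
  simp only [id]
  field_simp
  ring

lemma hasDerivAt_powerNonlin (hs : 0 < s) :
    HasDerivAt (powerNonlin a b m) (powerNonlin' a b m s) s := by
  refine ((((hasDerivAt_id s).rpow_const (Or.inl hs.ne')).const_mul a).sub
    ((hasDerivAt_id s).const_mul b)).congr_deriv ?_
  simp only [powerNonlin', add_sub_cancel_left, id]
  ring

lemma hasDerivAt_powerNonlin' (hs : 0 < s) :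
    HasDerivAt (powerNonlin' a b m) (powerNonlin'' a m s) s := by
  refine ((((hasDerivAt_id s).rpow_const (Or.inl hs.ne')).const_mul _).sub_const b).congr_deriv
    ?_
  simp only [powerNonlin'', id]
  ring

lemma powerNonlin''_pos (ha : 0 < a) (hm : 0 < m) (hs : 0 < s) : 0 < powerNonlin'' a m s := by
  unfold powerNonlin''
  positivity

lemma rpow_div_two_rpow_two_div {x : ℝ} (hx : 0 ≤ x) (hm : m ≠ 0) :
    (x ^ (m / 2)) ^ (2 / m) = x := by
  rw [← Real.rpow_mul hx, show m / 2 * (2 / m) = 1 by field_simp, Real.rpow_one]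

lemma powerNonlin_eq_zero (hξ : a * ξ ^ (2 / m) = b) (hξ0 : 0 < ξ) :
    powerNonlin a b m ξ = 0 := by
  rw [powerNonlin, add_comm, Real.rpow_add_one hξ0.ne', ← mul_assoc, hξ, sub_self]

lemma powerNonlin'_eq (hξ : a * ξ ^ (2 / m) = b) : powerNonlin' a b m ξ = 2 / m * b := by
  rw [powerNonlin', mul_right_comm, hξ]
  ring

lemma powerNonlin_pos (hξ : a * ξ ^ (2 / m) = b) (hξ0 : 0 < ξ) (ha : 0 < a) (hm : 0 < m)
    (hs : ξ < s) : 0 < powerNonlin a b m s := by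
  have hs0 := hξ0.trans hs
  have h : b < a * s ^ (2 / m) :=
    hξ ▸ mul_lt_mul_of_pos_left (Real.rpow_lt_rpow hξ0.le hs (by positivity)) ha
  rw [powerNonlin, add_comm, Real.rpow_add_one hs0.ne', ← mul_assoc]
  nlinarith

lemma powerPotential_neg (hξ : a * ξ ^ (2 / m) = b) (ha : 0 < a) (hm : 0 < m) (hs0 : 0 < s)
    (hs : s ≤ ξ) :
    powerPotential a b m s < 0 := by
  have h : a * s ^ (2 / m) ≤ b :=
    hξ ▸ mul_le_mul_of_nonneg_left (Real.rpow_le_rpow hs0.le hs (by positivity)) ha.le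
  have hb : 0 < b := hξ ▸ mul_pos ha (Real.rpow_pos_of_pos (hs0.trans_le hs) _)
  have hbs : 0 < b * s ^ 2 * (2 / m) := by positivity
  rw [powerPotential, add_comm, Real.rpow_add hs0, Real.rpow_two, ← mul_assoc, sub_neg,
    div_lt_div_iff₀ (by positivity) two_pos]
  nlinarith [mul_le_mul_of_nonneg_right h (sq_nonneg s)]

end PowerNonlinearity

namespace IsRadialSolution

variable {a b m ξ : ℝ} {u w : ℝ → ℝ}

lemma lt_initial_of_tendsto_zero (hu : IsRadialSolution (fun _ => powerNonlin a b m) u)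
    (ha : 0 < a) (hm : 0 < m) (hξ : a * ξ ^ (2 / m) = b) (hu0 : 0 < u 0)
    {l : Filter ℝ} [l.NeBot] (hl : ∀ᶠ t in l, 0 < t) (hul : Tendsto u l (𝓝 0)) : ξ < u 0 := by
  by_contra! h
  have hle := hu.potential_le_of_tendsto (hasDerivAt_powerPotential hm) hl hul
  have h0 : powerPotential a b m 0 = 0 := by
    rw [powerPotential, Real.zero_rpow (by positivity)]
    ring
  linarith [powerPotential_neg hξ ha hm hu0 h]

theorem exists_zero_before_level (hu : IsRadialSolution (fun _ => powerNonlin a b m) u)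
    (hw : IsRadialSolution (fun τ s => powerNonlin' a b m (u τ) * s) w) (hw0 : 0 < w 0)
    (ha : 0 < a) (hm : 0 < m) (hξ : a * ξ ^ (2 / m) = b) (hξ0 : 0 < ξ) (hξu : ξ < u 0)
    {τ₁ : ℝ} (hτ₁ : 0 < τ₁) (huτ₁ : u τ₁ = ξ) : ∃ t ∈ Ioo 0 τ₁, w t = 0 := by
  obtain ⟨σ, hσ, huσ, hξlt⟩ := exists_first_eq_of_lt_of_le hτ₁.le
    (hu.continuousOn.mono Icc_subset_Ici_self) hξu huτ₁.le
  have hξle : ∀ t ∈ Ioc 0 σ, ξ ≤ u t := fun t ht =>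
    ht.2.lt_or_eq.elim (fun h => (hξlt t ⟨ht.1.le, h⟩).le) fun h => (h ▸ huσ).ge
  have hupos : ∀ t ∈ Ioc 0 σ, 0 < u t := fun t ht => hξ0.trans_le (hξle t ht)
  obtain ⟨t, ht, hwt⟩ := hu.exists_zero_of_linearized hw hw0 hσ.1 (d2f := powerNonlin'' a m)
    (fun t ht => powerNonlin_pos hξ hξ0 ha hm (hξlt t ⟨ht.1.le, ht.2⟩))
    (huσ ▸ powerNonlin_eq_zero hξ hξ0)
    (by rw [huσ, powerNonlin'_eq hξ, ← hξ]; positivity)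
    (fun t ht => powerNonlin''_pos ha hm (hupos t ⟨ht.1, ht.2.le⟩))
    (fun t ht => hasDerivAt_powerNonlin (hupos t ht))
    (fun t ht => hasDerivAt_powerNonlin' (hupos t ht))
    (hasDerivAt_powerNonlin (hξ0.trans hξu)).continuousAt
    (hasDerivAt_powerNonlin' (hξ0.trans hξu)).continuousAt
  exact ⟨t, ⟨ht.1, ht.2.trans_le hσ.2⟩, hwt⟩

end IsRadialSolution

/-- The variation `w` must change sign before `τ₁` (Lemma 5.4): let `α ∈ G ∪ N`
with solution `u`, let `ξ₁ = (b̃/ã)^{m/2}` be the positive zero of `f`, and let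
`τ₁ ∈ (0, b(α))` be the point with `u(τ₁) = ξ₁`.  If `w` solves the linearized
equation `w'' + coth(τ)·w' + f'(u)·w = 0` with `w(0) = 1`, `w'(0⁺) = 0`, where
`f'(s) = ã(1+2/m)s^{2/m} − b̃`, then `w` has a zero in `(0, τ₁)`.  The two
conjuncts treat the cases `α ∈ N` (finite smallest zero `b(α)`) and `α ∈ G`
(`b(α) = ∞`). -/
theorem variation_changes_sign
    (m a b : ℝ) (hm : 2 < m) (ha : 0 < a) (hb : 0 < b)
    (F : ℝ → ℝ) (hF : ∀ s, F s = a * s ^ (1 + 2 / m) - b * s)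
    (α : ℝ) (hα : 0 < α)
    (u : ℝ → ℝ)
    (huc : ContinuousOn u (Ici 0))
    (hud : ∀ τ ∈ Ioi (0 : ℝ), DifferentiableAt ℝ u τ)
    (hud' : ∀ τ ∈ Ioi (0 : ℝ), DifferentiableAt ℝ (deriv u) τ)
    (hode : ∀ τ ∈ Ioi (0 : ℝ),
      deriv (deriv u) τ + (Real.cosh τ / Real.sinh τ) * deriv u τ + F (u τ) = 0)
    (hu0 : u 0 = α)
    (hu'0 : Tendsto (deriv u) (nhdsWithin 0 (Ioi 0)) (nhds 0))
    (ξ₁ : ℝ) (hξ₁ : ξ₁ = (b / a) ^ (m / 2))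
    (w : ℝ → ℝ)
    (hwc : ContinuousOn w (Ici 0))
    (hwd : ∀ τ ∈ Ioi (0 : ℝ), DifferentiableAt ℝ w τ)
    (hwd' : ∀ τ ∈ Ioi (0 : ℝ), DifferentiableAt ℝ (deriv w) τ)
    (hwode : ∀ τ ∈ Ioi (0 : ℝ),
      deriv (deriv w) τ + (Real.cosh τ / Real.sinh τ) * deriv w τ
        + (a * (1 + 2 / m) * u τ ^ (2 / m) - b) * w τ = 0)
    (hw0 : w 0 = 1)
    (hw'0 : Tendsto (deriv w) (nhdsWithin 0 (Ioi 0)) (nhds 0)) :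
    (∀ bα : ℝ, 0 < bα → u bα = 0 → (∀ τ ∈ Ico 0 bα, 0 < u τ) →
        ∀ τ₁ ∈ Ioo 0 bα, u τ₁ = ξ₁ → ∃ τ ∈ Ioo 0 τ₁, w τ = 0) ∧
    ((∀ τ ∈ Ioi (0 : ℝ), 0 < u τ) → Tendsto u atTop (nhds 0) →
        ∀ τ₁ ∈ Ioi (0 : ℝ), u τ₁ = ξ₁ → ∃ τ ∈ Ioo 0 τ₁, w τ = 0) := by
  obtain rfl : F = powerNonlin a b m := funext hF
  subst hu0
  have hm0 : 0 < m := by linarith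
  have hu : IsRadialSolution (fun _ => powerNonlin a b m) u := ⟨hud, hud', hode, huc, hu'0⟩
  have hw : IsRadialSolution (fun τ s => powerNonlin' a b m (u τ) * s) w :=
    ⟨hwd, hwd', hwode, hwc, hw'0⟩
  have hξ : a * ξ₁ ^ (2 / m) = b := by
    rw [hξ₁, rpow_div_two_rpow_two_div (div_pos hb ha).le hm0.ne', mul_div_cancel₀ _ ha.ne']
  have hξ0 : 0 < ξ₁ := hξ₁ ▸ Real.rpow_pos_of_pos (div_pos hb ha) _
  have hw0 : 0 < w 0 := hw0 ▸ one_pos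
  have key : ∀ (l : Filter ℝ) [l.NeBot], (∀ᶠ t in l, 0 < t) → Tendsto u l (𝓝 0) →
      ∀ τ₁ ∈ Ioi (0 : ℝ), u τ₁ = ξ₁ → ∃ τ ∈ Ioo 0 τ₁, w τ = 0 := fun l _ hl hul _ hτ₁ =>
    hu.exists_zero_before_level hw hw0 ha hm0 hξ hξ0
      (hu.lt_initial_of_tendsto_zero ha hm0 hξ hα hl hul) hτ₁
  refine ⟨fun bα hbα hubα _ τ₁ hτ₁ => key (𝓝[<] bα) ?_ ?_ τ₁ hτ₁.1,
    fun _ hutop => key atTop (eventually_gt_atTop 0) hutop⟩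
  · filter_upwards [Ioo_mem_nhdsLT hbα] with t ht using ht.1
  · have hIci : Ici 0 ∈ 𝓝[<] bα := mem_of_superset (Ioo_mem_nhdsLT hbα) fun _ ht => ht.1.le
    exact hubα ▸ ((huc bα hbα.le).mono_of_mem_nhdsWithin hIci).tendsto
end

section
/- Boundary behaviour of the auxiliary function θ (Lemma 5.6): Let α ∈ G ∪ N, let u be the corresponding solution, and define θ(τ) = −sinh(τ)·u'(τ)/u(τ) for τ ∈ (0, b(α)). Then lim_{τ→0+} θ(τ) = 0 and lim_{τ→b(α)} θ(τ) = +∞ (for α ∈ G this means lim_{τ→∞} θ(τ) = +∞; in particular, for α ∈ G one eventually has −u'(τ)/u(τ) > √(b̃/2)). -/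
open Set Filter Topology Real

/-!
Near `τ = 0` the numerator `-sinh τ · u'(τ)` tends to `0` while `u → α > 0`.

At the first zero `β = b(α)` one has `u'(β) < 0`, so `θ → +∞` there. Indeed `u'(β) ≤ 0`, and if
`u'(β) = 0` the energy `E = (sinh τ · u')² + (sinh τ · u)²` satisfies `E' ≥ -K E` on an interval
`[t₀, β]` on which `|F(u)| ≤ L u`; then `E e^{Kτ}` is nondecreasing and vanishes at `β`, so
`u(t₀) = 0`.

For a ground state, `u → 0` gives `F(u) + l² u < 0` eventually whenever `l² < b̃`. Since
`(sinh τ · u')' = -sinh τ · F(u) > 0`, `u'` is eventually negative (otherwise `u` would increase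
to a positive value). Then `(e^{-lτ} (u' + l u))' = e^{-lτ} (-coth τ · u' - F(u) - l² u) > 0`, so
if `u' + l u ≥ 0` at some late time, `e^{-lτ} (u' + l u)` stays above a positive constant,
contradicting `e^{-lτ} (u' + l u) ≤ e^{-lτ} l u → 0`. Hence `-u'/u > l` eventually, and
`θ = sinh τ · (-u'/u) → ∞` for `l = √(b̃/2)`.
-/

theorem strictMonoOn_of_hasDerivAt_pos {D : Set ℝ} (hD : Convex ℝ D) {f f' : ℝ → ℝ}
    (hf : ∀ x ∈ D, HasDerivAt f (f' x) x) (hf' : ∀ x ∈ interior D, 0 < f' x) :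
    StrictMonoOn f D :=
  strictMonoOn_of_hasDerivWithinAt_pos hD (fun x hx ↦ (hf x hx).continuousAt.continuousWithinAt)
    (fun x hx ↦ (hf x (interior_subset hx)).hasDerivWithinAt) hf'

theorem monotoneOn_mul_exp_of_hasDerivAt {D : Set ℝ} (hD : Convex ℝ D) {f f' : ℝ → ℝ} {K : ℝ}
    (hf : ∀ x ∈ D, HasDerivAt f (f' x) x) (hf' : ∀ x ∈ interior D, -(K * f x) ≤ f' x) :
    MonotoneOn (fun x ↦ f x * exp (K * x)) D := by
  have hg : ∀ x ∈ D, HasDerivAt (fun x ↦ f x * exp (K * x))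
      ((f' x + K * f x) * exp (K * x)) x := fun x hx ↦
    ((hf x hx).mul ((hasDerivAt_id x).const_mul K).exp).congr_deriv (by simp only [id]; ring)
  exact monotoneOn_of_hasDerivWithinAt_nonneg hD
    (fun x hx ↦ (hg x hx).continuousAt.continuousWithinAt)
    (fun x hx ↦ (hg x (interior_subset hx)).hasDerivWithinAt)
    fun x hx ↦ mul_nonneg (by linarith [hf' x hx]) (exp_pos _).le

theorem deriv_nonpos_of_eq_zero_of_pos {f : ℝ → ℝ} {a b : ℝ} (hf : DifferentiableAt ℝ f b)
    (hab : a < b) (hfb : f b = 0) (hpos : ∀ x ∈ Ioo a b, 0 < f x) : deriv f b ≤ 0 := by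
  have hslope : Tendsto (slope f b) (𝓝[<] b) (𝓝 (deriv f b)) :=
    (hasDerivWithinAt_iff_tendsto_slope' (s := Iio b) (lt_irrefl b)).1
      hf.hasDerivAt.hasDerivWithinAt
  refine le_of_tendsto hslope ?_
  filter_upwards [Ioo_mem_nhdsLT hab] with x hx
  rw [slope_def_field, hfb, sub_zero]
  exact div_nonpos_of_nonneg_of_nonpos (hpos x hx).le (by linarith [hx.2])

structure SolvesRadialODE (F u : ℝ → ℝ) : Prop where
  differentiableAt : ∀ τ ∈ Ioi (0 : ℝ), DifferentiableAt ℝ u τ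
  differentiableAt_deriv : ∀ τ ∈ Ioi (0 : ℝ), DifferentiableAt ℝ (deriv u) τ
  ode : ∀ τ ∈ Ioi (0 : ℝ), deriv (deriv u) τ + (cosh τ / sinh τ) * deriv u τ + F (u τ) = 0

namespace SolvesRadialODE

variable {F u : ℝ → ℝ} {τ : ℝ}

theorem hasDerivAt_sinh_mul_deriv (h : SolvesRadialODE F u) (hτ : 0 < τ) :
    HasDerivAt (fun σ ↦ sinh σ * deriv u σ) (-(sinh τ * F (u τ))) τ := by
  have hcoth : sinh τ * (cosh τ / sinh τ) = cosh τ := mul_div_cancel₀ _ (sinh_pos_iff.2 hτ).ne'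
  refine ((hasDerivAt_sinh τ).mul (h.differentiableAt_deriv τ hτ).hasDerivAt).congr_deriv ?_
  linear_combination sinh τ * h.ode τ hτ - deriv u τ * hcoth

theorem hasDerivAt_exp_mul (h : SolvesRadialODE F u) (l : ℝ) (hτ : 0 < τ) :
    HasDerivAt (fun σ ↦ exp (-(l * σ)) * (deriv u σ + l * u σ))
      (exp (-(l * τ)) * (-(cosh τ / sinh τ * deriv u τ) - (F (u τ) + l ^ 2 * u τ))) τ := by
  refine ((((hasDerivAt_id τ).const_mul l).neg.exp).mul
    ((h.differentiableAt_deriv τ hτ).hasDerivAt.add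
      ((h.differentiableAt τ hτ).hasDerivAt.const_mul l))).congr_deriv ?_
  simp only [id, mul_one, Pi.neg_apply, Pi.add_apply]
  linear_combination exp (-(l * τ)) * h.ode τ hτ

theorem hasDerivAt_energy (h : SolvesRadialODE F u) (hτ : 0 < τ) :
    HasDerivAt (fun σ ↦ (sinh σ * deriv u σ) ^ 2 + (sinh σ * u σ) ^ 2)
      (2 * (sinh τ * deriv u τ) * -(sinh τ * F (u τ)) +
        2 * (sinh τ * u τ) * (cosh τ * u τ + sinh τ * deriv u τ)) τ := by
  refine (((h.hasDerivAt_sinh_mul_deriv hτ).pow 2).add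
    (((hasDerivAt_sinh τ).mul (h.differentiableAt τ hτ).hasDerivAt).pow 2)).congr_deriv ?_
  simp only [Nat.cast_ofNat, Pi.mul_apply]; ring

theorem eq_zero_of_eq_zero_of_deriv_eq_zero (h : SolvesRadialODE F u) {L t₀ t₁ : ℝ} (hL : 0 ≤ L)
    (ht₀ : 0 < t₀) (ht : t₀ ≤ t₁) (hF : ∀ τ ∈ Icc t₀ t₁, |F (u τ)| ≤ L * |u τ|)
    (hu : u t₁ = 0) (hu' : deriv u t₁ = 0) : u t₀ = 0 := by
  have hmono := monotoneOn_mul_exp_of_hasDerivAt (K := L + 1) (convex_Icc t₀ t₁)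
    (fun τ hτ ↦ h.hasDerivAt_energy (ht₀.trans_le hτ.1)) fun τ hτ ↦ ?_
  · have h₀ := hmono (left_mem_Icc.2 ht) (right_mem_Icc.2 ht) ht
    simp only [hu, hu', mul_zero, ne_eq, OfNat.ofNat_ne_zero, not_false_eq_true, zero_pow,
      add_zero, zero_mul] at h₀
    have : (sinh t₀ * u t₀) ^ 2 = 0 := by
      nlinarith [exp_pos ((L + 1) * t₀), sq_nonneg (sinh t₀ * deriv u t₀),
        sq_nonneg (sinh t₀ * u t₀)]
    simpa [(sinh_pos_iff.2 ht₀).ne'] using this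
  · rw [interior_Icc] at hτ
    have hs : 0 < sinh τ := sinh_pos_iff.2 (ht₀.trans hτ.1)
    set p := sinh τ * deriv u τ
    set q := sinh τ * u τ
    have hsF : |sinh τ * F (u τ)| ≤ L * |q| := by
      rw [abs_mul, abs_mul, abs_of_pos hs]
      nlinarith [hF τ (Ioo_subset_Icc_self hτ)]
    have hpq : 2 * |p| * |q| ≤ p ^ 2 + q ^ 2 := by
      nlinarith [sq_nonneg (|p| - |q|), sq_abs p, sq_abs q]
    have hF' : -(L * (p ^ 2 + q ^ 2)) ≤ 2 * p * -(sinh τ * F (u τ)) := by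
      have := le_abs_self (2 * p * (sinh τ * F (u τ)))
      rw [abs_mul, abs_mul, abs_two] at this
      nlinarith [abs_nonneg p, mul_le_mul_of_nonneg_left hpq hL]
    have hcosh : 0 ≤ q * (cosh τ * u τ) := by
      have : q * (cosh τ * u τ) = sinh τ * cosh τ * u τ ^ 2 := by ring
      rw [this]; have := cosh_pos τ; positivity
    nlinarith [sq_nonneg (p + q)]

theorem deriv_neg_of_eq_zero (h : SolvesRadialODE F u) {L b : ℝ} (hL : 0 ≤ L)
    (hF : ∀ s ∈ Icc (0 : ℝ) 1, |F s| ≤ L * s) (hb : 0 < b) (hub : u b = 0)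
    (hpos : ∀ τ ∈ Ioo 0 b, 0 < u τ) : deriv u b < 0 := by
  have hu := h.differentiableAt b hb
  refine (deriv_nonpos_of_eq_zero_of_pos hu hb hub hpos).lt_of_ne fun h₀ ↦ ?_
  have hsmall : ∀ᶠ τ in 𝓝 b, u τ < 1 ∧ 0 < τ :=
    (hu.continuousAt.eventually (gt_mem_nhds (by rw [hub]; exact one_pos))).and (lt_mem_nhds hb)
  obtain ⟨l, hl, hsub⟩ := mem_nhdsLE_iff_exists_Ioc_subset.1 (nhdsWithin_le_nhds hsmall)
  have ht₀ : (l + b) / 2 ∈ Ioo l b := ⟨by linarith [mem_Iio.1 hl], by linarith [mem_Iio.1 hl]⟩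
  have hIcc : Icc ((l + b) / 2) b ⊆ Ioc l b := Icc_subset_Ioc_iff ht₀.2.le |>.2 ⟨ht₀.1, le_rfl⟩
  have hnonneg : ∀ τ ∈ Icc ((l + b) / 2) b, 0 ≤ u τ := fun τ hτ ↦
    hτ.2.eq_or_lt.elim (fun e ↦ (e ▸ hub).ge) fun hτb ↦ (hpos τ ⟨(hsub (hIcc hτ)).2, hτb⟩).le
  have := h.eq_zero_of_eq_zero_of_deriv_eq_zero hL (hsub (hIcc (left_mem_Icc.2 ht₀.2.le))).2
    ht₀.2.le (fun τ hτ ↦ ?_) hub h₀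
  · exact (hpos _ ⟨(hsub (hIcc (left_mem_Icc.2 ht₀.2.le))).2, ht₀.2⟩).ne' this
  · rw [abs_of_nonneg (hnonneg τ hτ)]
    exact hF _ ⟨hnonneg τ hτ, (hsub (hIcc hτ)).1.le⟩

theorem eventually_deriv_neg (h : SolvesRadialODE F u) (hpos : ∀ τ ∈ Ioi 0, 0 < u τ)
    (hlim : Tendsto u atTop (𝓝 0)) (hF : ∀ᶠ τ in atTop, F (u τ) < 0) :
    ∀ᶠ τ in atTop, deriv u τ < 0 := by
  obtain ⟨T, hT⟩ := eventually_atTop.1 (hF.and (eventually_gt_atTop 0))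
  refine eventually_atTop.2 ⟨T, fun τ₀ hτ₀ ↦ ?_⟩
  by_contra! h₀
  have hIci : ∀ τ ∈ Ici τ₀, T ≤ τ := fun τ hτ ↦ hτ₀.trans hτ
  have hv : StrictMonoOn (fun σ ↦ sinh σ * deriv u σ) (Ici τ₀) :=
    strictMonoOn_of_hasDerivAt_pos (convex_Ici τ₀)
      (fun τ hτ ↦ h.hasDerivAt_sinh_mul_deriv (hT τ (hIci τ hτ)).2) fun τ hτ ↦ by
        rw [interior_Ici] at hτ
        have := hT τ (hIci τ (Ioi_subset_Ici_self hτ))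
        nlinarith [sinh_pos_iff.2 this.2]
  have hu' : ∀ τ ∈ Ioi τ₀, 0 < deriv u τ := fun τ hτ ↦ by
    have := hv self_mem_Ici (Ioi_subset_Ici_self hτ) hτ
    nlinarith [sinh_pos_iff.2 (hT τ₀ hτ₀).2,
      sinh_pos_iff.2 (hT τ (hIci τ (Ioi_subset_Ici_self hτ))).2]
  have hu : StrictMonoOn u (Ici τ₀) :=
    strictMonoOn_of_hasDerivAt_pos (convex_Ici τ₀)
      (fun τ hτ ↦ (h.differentiableAt τ (hT τ (hIci τ hτ)).2).hasDerivAt)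
      (by simpa only [interior_Ici] using hu')
  have : u (τ₀ + 1) ≤ 0 := ge_of_tendsto hlim <| eventually_atTop.2
    ⟨τ₀ + 1, fun τ hτ ↦ hu.monotoneOn (mem_Ici.2 (by linarith)) (mem_Ici.2 (by linarith)) hτ⟩
  linarith [hu self_mem_Ici (by simp : τ₀ + 1 ∈ Ici τ₀) (lt_add_one τ₀),
    hpos τ₀ (hT τ₀ hτ₀).2]

theorem eventually_lt_neg_deriv_div (h : SolvesRadialODE F u) (hpos : ∀ τ ∈ Ioi 0, 0 < u τ)
    (hlim : Tendsto u atTop (𝓝 0)) {l : ℝ} (hl : 0 < l)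
    (hF : ∀ᶠ τ in atTop, F (u τ) + l ^ 2 * u τ < 0) :
    ∀ᶠ τ in atTop, l < -deriv u τ / u τ := by
  have hF' : ∀ᶠ τ in atTop, F (u τ) < 0 := by
    filter_upwards [hF, eventually_gt_atTop 0] with τ hτ hτ₀
    nlinarith [hpos τ hτ₀]
  obtain ⟨T, hT⟩ := eventually_atTop.1
    ((hF.and (h.eventually_deriv_neg hpos hlim hF')).and (eventually_gt_atTop 0))
  refine eventually_atTop.2 ⟨T, fun τ₀ hτ₀ ↦ ?_⟩
  rw [lt_div_iff₀ (hpos τ₀ (hT τ₀ hτ₀).2)]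
  by_contra! h₀
  have hIci : ∀ τ ∈ Ici τ₀, T ≤ τ := fun τ hτ ↦ hτ₀.trans hτ
  set g := fun σ ↦ exp (-(l * σ)) * (deriv u σ + l * u σ)
  have hg : StrictMonoOn g (Ici τ₀) :=
    strictMonoOn_of_hasDerivAt_pos (convex_Ici τ₀)
      (fun τ hτ ↦ h.hasDerivAt_exp_mul l (hT τ (hIci τ hτ)).2) fun τ hτ ↦ by
        rw [interior_Ici] at hτ
        obtain ⟨⟨hFτ, hu'τ⟩, hτ0⟩ := hT τ (hIci τ (Ioi_subset_Ici_self hτ))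
        have hc : 0 < cosh τ / sinh τ := div_pos (cosh_pos τ) (sinh_pos_iff.2 hτ0)
        have : 0 < -(cosh τ / sinh τ * deriv u τ) := by nlinarith
        exact mul_pos (exp_pos _) (by linarith)
  have hdecay : Tendsto (fun τ ↦ exp (-(l * τ)) * (l * u τ)) atTop (𝓝 0) := by
    simpa using (tendsto_exp_neg_atTop_nhds_zero.comp
      (tendsto_id.const_mul_atTop hl)).mul (hlim.const_mul l)
  have : g (τ₀ + 1) ≤ 0 := ge_of_tendsto hdecay <| eventually_atTop.2
    ⟨τ₀ + 1, fun τ hτ ↦ (hg.monotoneOn (mem_Ici.2 (by linarith)) (mem_Ici.2 (by linarith)) hτ).trans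
      (mul_le_mul_of_nonneg_left (by linarith [(hT τ (by linarith)).1.2]) (exp_pos _).le)⟩
  have : 0 ≤ g τ₀ := mul_nonneg (exp_pos _).le (by linarith)
  linarith [hg self_mem_Ici (by simp : τ₀ + 1 ∈ Ici τ₀) (lt_add_one τ₀)]

end SolvesRadialODE

noncomputable def theta (u : ℝ → ℝ) (τ : ℝ) : ℝ := -(sinh τ * deriv u τ) / u τ

theorem tendsto_theta_nhdsGT_zero {u : ℝ → ℝ} {α : ℝ} (hα : α ≠ 0)
    (hu : Tendsto u (𝓝[>] 0) (𝓝 α)) (hu' : Tendsto (deriv u) (𝓝[>] 0) (𝓝 0)) :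
    Tendsto (theta u) (𝓝[>] 0) (𝓝 0) := by
  have hsinh : Tendsto sinh (𝓝[>] 0) (𝓝 0) := by
    simpa using continuous_sinh.continuousWithinAt.tendsto (s := Ioi 0) (x := 0)
  have := ((hsinh.mul hu').neg).div hu hα
  rw [mul_zero, neg_zero, zero_div] at this
  exact this.congr fun τ ↦ rfl

theorem tendsto_theta_nhdsLT_atTop {u : ℝ → ℝ} {b : ℝ} (hb : 0 < b) (hu : ContinuousAt u b)
    (hub : u b = 0) (hpos : ∀ᶠ τ in 𝓝[<] b, 0 < u τ) (hu' : ContinuousAt (deriv u) b)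
    (hneg : deriv u b < 0) : Tendsto (theta u) (𝓝[<] b) atTop := by
  have hnum : Tendsto (fun τ ↦ -(sinh τ * deriv u τ)) (𝓝[<] b) (𝓝 (-(sinh b * deriv u b))) :=
    (continuous_sinh.continuousAt.mul hu').neg.tendsto.mono_left nhdsWithin_le_nhds
  have hden : Tendsto u (𝓝[<] b) (𝓝[>] 0) :=
    tendsto_nhdsWithin_iff.2 ⟨hub ▸ hu.tendsto.mono_left nhdsWithin_le_nhds, hpos⟩
  exact (hnum.pos_mul_atTop (by nlinarith [sinh_pos_iff.2 hb])
    (tendsto_inv_nhdsGT_zero.comp hden)).congr fun τ ↦ (div_eq_mul_inv _ _).symm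

theorem tendsto_theta_atTop_atTop {u : ℝ → ℝ} {l : ℝ} (hl : 0 < l)
    (h : ∀ᶠ τ in atTop, l < -deriv u τ / u τ) : Tendsto (theta u) atTop atTop := by
  have hsinh : Tendsto sinh atTop atTop :=
    tendsto_atTop_mono' atTop (eventually_ge_atTop 0 |>.mono fun x hx ↦ self_le_sinh_iff.2 hx)
      tendsto_id
  refine tendsto_atTop_mono' atTop ?_ (hsinh.atTop_mul_const hl)
  filter_upwards [h, eventually_gt_atTop 0] with τ hτ hτ₀
  have : theta u τ = sinh τ * (-deriv u τ / u τ) := by rw [theta]; ring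
  rw [this]
  exact mul_le_mul_of_nonneg_left hτ.le (sinh_pos_iff.2 hτ₀).le

theorem abs_mul_rpow_one_add_sub_le {a b p s : ℝ} (hp : 0 ≤ p) (hs : s ∈ Icc (0 : ℝ) 1) :
    |a * s ^ (1 + p) - b * s| ≤ (|a| + |b|) * s := by
  have hsp : s ^ (1 + p) = s * s ^ p := by rw [rpow_add' hs.1 (by positivity), rpow_one]
  have hp1 : s ^ p ≤ 1 := rpow_le_one hs.1 hs.2 hp
  calc |a * s ^ (1 + p) - b * s| ≤ |a| * s * s ^ p + |b| * s := by
        rw [hsp]; refine (abs_sub _ _).trans_eq ?_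
        simp only [abs_mul, abs_of_nonneg hs.1, abs_of_nonneg (rpow_nonneg hs.1 p)]; ring
    _ ≤ (|a| + |b|) * s := by
        nlinarith [mul_le_mul_of_nonneg_left hp1 (mul_nonneg (abs_nonneg a) hs.1)]

theorem eventually_mul_rpow_one_add_sub_lt {a b c p : ℝ} (hp : 0 < p) (hc : c < b) :
    ∀ᶠ s in 𝓝[>] (0 : ℝ), a * s ^ (1 + p) - b * s + c * s < 0 := by
  have hlim : Tendsto (fun s : ℝ ↦ a * s ^ p) (𝓝[>] 0) (𝓝 0) := by
    simpa using
      ((tendsto_nhdsWithin_of_tendsto_nhds tendsto_id).rpow_const_nhds_zero hp).const_mul a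
  have hsmall : ∀ᶠ s in 𝓝[>] (0 : ℝ), a * s ^ p < b - c :=
    hlim.eventually (gt_mem_nhds (by linarith))
  filter_upwards [hsmall, self_mem_nhdsWithin] with s hs hs₀
  rw [rpow_add' (le_of_lt hs₀) (by positivity), rpow_one]
  nlinarith [mem_Ioi.1 hs₀]

theorem theta_boundary_behaviour_general
    (m a b : ℝ) (hm : 2 < m) (hb : 0 < b)
    (F : ℝ → ℝ) (hF : ∀ s, F s = a * s ^ (1 + 2 / m) - b * s)
    (α : ℝ) (hα : 0 < α)
    (u : ℝ → ℝ)
    (huc : ContinuousOn u (Ici 0))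
    (hud : ∀ τ ∈ Ioi (0 : ℝ), DifferentiableAt ℝ u τ)
    (hud' : ∀ τ ∈ Ioi (0 : ℝ), DifferentiableAt ℝ (deriv u) τ)
    (hode : ∀ τ ∈ Ioi (0 : ℝ),
      deriv (deriv u) τ + (Real.cosh τ / Real.sinh τ) * deriv u τ + F (u τ) = 0)
    (hu0 : u 0 = α)
    (hu'0 : Tendsto (deriv u) (nhdsWithin 0 (Ioi 0)) (nhds 0)) :
    (∀ bα : ℝ, 0 < bα → u bα = 0 → (∀ τ ∈ Ico 0 bα, 0 < u τ) →
        Tendsto (fun τ => -(Real.sinh τ * deriv u τ) / u τ)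
            (nhdsWithin 0 (Ioi 0)) (nhds 0) ∧
        Tendsto (fun τ => -(Real.sinh τ * deriv u τ) / u τ)
            (nhdsWithin bα (Iio bα)) atTop) ∧
    ((∀ τ ∈ Ioi (0 : ℝ), 0 < u τ) → Tendsto u atTop (nhds 0) →
        Tendsto (fun τ => -(Real.sinh τ * deriv u τ) / u τ)
            (nhdsWithin 0 (Ioi 0)) (nhds 0) ∧
        Tendsto (fun τ => -(Real.sinh τ * deriv u τ) / u τ) atTop atTop ∧
        ∃ T : ℝ, ∀ τ ≥ T, Real.sqrt (b / 2) < -(deriv u τ) / u τ) := by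
  have hsol : SolvesRadialODE F u := ⟨hud, hud', hode⟩
  have hp : 0 < 2 / m := by positivity
  have hθ₀ : Tendsto (theta u) (𝓝[>] 0) (𝓝 0) := tendsto_theta_nhdsGT_zero hα.ne'
    (hu0 ▸ (huc 0 self_mem_Ici).tendsto.mono_left (nhdsWithin_mono 0 Ioi_subset_Ici_self)) hu'0
  refine ⟨fun bα hbα hubα hpos ↦ ⟨hθ₀, ?_⟩, fun hpos hlim ↦ ⟨hθ₀, ?_⟩⟩
  · have hpos' : ∀ τ ∈ Ioo 0 bα, 0 < u τ := fun τ hτ ↦ hpos τ (Ioo_subset_Ico_self hτ)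
    have hneg : deriv u bα < 0 := hsol.deriv_neg_of_eq_zero (L := |a| + |b|) (by positivity)
      (fun s hs ↦ hF s ▸ abs_mul_rpow_one_add_sub_le hp.le hs) hbα hubα hpos'
    exact tendsto_theta_nhdsLT_atTop hbα (hud bα hbα).continuousAt hubα
      (mem_of_superset (Ioo_mem_nhdsLT hbα) hpos') (hud' bα hbα).continuousAt hneg
  · have hl : 0 < √(b / 2) := by positivity
    have hu : Tendsto u atTop (𝓝[>] 0) := tendsto_nhdsWithin_iff.2
      ⟨hlim, (eventually_gt_atTop 0).mono hpos⟩
    have hF' : ∀ᶠ s in 𝓝[>] 0, F s + √(b / 2) ^ 2 * s < 0 := by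
      simp only [hF]
      exact eventually_mul_rpow_one_add_sub_lt hp (by rw [sq_sqrt (by positivity)]; linarith)
    have hlt : ∀ᶠ τ in atTop, √(b / 2) < -deriv u τ / u τ :=
      hsol.eventually_lt_neg_deriv_div hpos hlim hl (hu.eventually hF')
    exact ⟨tendsto_theta_atTop_atTop hl hlt, eventually_atTop.1 hlt⟩

/-- Boundary behaviour of the auxiliary function `θ` (Lemma 5.6): for `α ∈ G ∪ N`
with solution `u` and `θ(τ) = −sinh(τ)·u'(τ)/u(τ)`, one has `θ(τ) → 0` as `τ → 0⁺`
and `θ(τ) → +∞` as `τ → b(α)` (for `α ∈ G` this means `θ(τ) → +∞` as `τ → ∞`;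
in particular, for `α ∈ G` one eventually has `−u'(τ)/u(τ) > √(b̃/2)`).
The two conjuncts treat the cases `α ∈ N` and `α ∈ G`. -/
theorem theta_boundary_behaviour
    (m a b : ℝ) (hm : 2 < m) (ha : 0 < a) (hb : 0 < b)
    (F : ℝ → ℝ) (hF : ∀ s, F s = a * s ^ (1 + 2 / m) - b * s)
    (α : ℝ) (hα : 0 < α)
    (u : ℝ → ℝ)
    (huc : ContinuousOn u (Ici 0))
    (hud : ∀ τ ∈ Ioi (0 : ℝ), DifferentiableAt ℝ u τ)
    (hud' : ∀ τ ∈ Ioi (0 : ℝ), DifferentiableAt ℝ (deriv u) τ)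
    (hode : ∀ τ ∈ Ioi (0 : ℝ),
      deriv (deriv u) τ + (Real.cosh τ / Real.sinh τ) * deriv u τ + F (u τ) = 0)
    (hu0 : u 0 = α)
    (hu'0 : Tendsto (deriv u) (nhdsWithin 0 (Ioi 0)) (nhds 0)) :
    (∀ bα : ℝ, 0 < bα → u bα = 0 → (∀ τ ∈ Ico 0 bα, 0 < u τ) →
        Tendsto (fun τ => -(Real.sinh τ * deriv u τ) / u τ)
            (nhdsWithin 0 (Ioi 0)) (nhds 0) ∧
        Tendsto (fun τ => -(Real.sinh τ * deriv u τ) / u τ)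
            (nhdsWithin bα (Iio bα)) atTop) ∧
    ((∀ τ ∈ Ioi (0 : ℝ), 0 < u τ) → Tendsto u atTop (nhds 0) →
        Tendsto (fun τ => -(Real.sinh τ * deriv u τ) / u τ)
            (nhdsWithin 0 (Ioi 0)) (nhds 0) ∧
        Tendsto (fun τ => -(Real.sinh τ * deriv u τ) / u τ) atTop atTop ∧
        ∃ T : ℝ, ∀ τ ≥ T, Real.sqrt (b / 2) < -(deriv u τ) / u τ) :=
  theta_boundary_behaviour_general m a b hm hb F hF α hα u huc hud hud' hode hu0 hu'0
end
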